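/- arXiv:2408.08382 — 2 statements merged into one kernel-verified Lean document; each statement's English description precedes it below -/
import Mathlib

section
/- For every integer n ≥ 4, let G be the line graph of the complete graph on n vertices, i.e., the graph whose vertices are the 2-element subsets of {1,…,n}, with two such subsets adjacent if and only if their intersection is nonempty. Then α(G) = ⌊n/2⌋ and χ̄(G) = n - 2. -/
/-- α: the independence number of a finite simple graph, i.e. the maximum size
of a set of pairwise non-adjacent vertices. -/
noncomputable def indepNum {V : Type} [Fintype V] (G : SimpleGraph V) : ℕ :=
  sSup {k | ∃ I : Finset V, (∀ u ∈ I, ∀ v ∈ I, u ≠ v → ¬ G.Adj u v) ∧ I.card = k}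

/-- χ̄: the clique cover number of a finite simple graph, i.e. the minimum
number of cliques whose union is the vertex set. -/
noncomputable def cliqueCoverNum {V : Type} [Fintype V] (G : SimpleGraph V) : ℕ :=
  sInf {k | ∃ 𝒞 : Finset (Finset V), 𝒞.card = k ∧
    (∀ C ∈ 𝒞, G.IsClique (C : Set V)) ∧ ∀ v : V, ∃ C ∈ 𝒞, v ∈ C}

/-- The line graph of the complete graph on `n` vertices: the vertices are the
2-element subsets of `{1,…,n}`, two of them being adjacent iff their
intersection is nonempty. -/
def lineOfComplete (n : ℕ) : SimpleGraph {s : Finset (Fin n) // s.card = 2} where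
  Adj a b := a ≠ b ∧ ((a : Finset (Fin n)) ∩ (b : Finset (Fin n))).Nonempty
  symm := by
    constructor
    intro a b h
    exact ⟨h.1.symm, by rw [Finset.inter_comm]; exact h.2⟩
  loopless := by
    constructor
    intro a h
    exact h.1 rfl

/-! ### Auxiliary definitions and lemmas -/

abbrev EV (n : ℕ) := {s : Finset (Fin n) // s.card = 2}

def medge (n i : ℕ) (h : 2 * i + 1 < n) : EV n :=
  ⟨({⟨2 * i, by omega⟩, ⟨2 * i + 1, h⟩} : Finset (Fin n)),
    Finset.card_pair (by intro h'; rw [Fin.mk.injEq] at h'; omega)⟩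

lemma medge_fst (n i : ℕ) (h : 2 * i + 1 < n) :
    (medge n i h).1 = {⟨2 * i, by omega⟩, ⟨2 * i + 1, h⟩} := rfl

lemma indep_exists (n : ℕ) (hn : 4 ≤ n) :
    ∃ I : Finset (EV n), (∀ u ∈ I, ∀ v ∈ I, u ≠ v →
      ¬ (u ≠ v ∧ ((u : Finset (Fin n)) ∩ (v : Finset (Fin n))).Nonempty)) ∧ I.card = n / 2 := by
  have hlt : ∀ i ∈ Finset.range (n / 2), 2 * i + 1 < n := by
    intro i hi; rw [Finset.mem_range] at hi; omega
  refine ⟨(Finset.range (n/2)).attach.image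
      (fun i => medge n i.1 (hlt i.1 i.2)), ?_, ?_⟩
  · intro u hu v hv huv h
    simp only [Finset.mem_image, Finset.mem_attach, true_and] at hu hv
    obtain ⟨i, rfl⟩ := hu
    obtain ⟨j, rfl⟩ := hv
    obtain ⟨x, hx⟩ := h.2
    rw [medge_fst, medge_fst] at hx
    simp only [Finset.mem_inter, Finset.mem_insert, Finset.mem_singleton, Fin.ext_iff] at hx
    have : i.1 ≠ j.1 := fun h' => huv (by rw [Subtype.ext h'])
    omega
  · rw [Finset.card_image_of_injective _ ?_, Finset.card_attach, Finset.card_range]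
    intro i j hij
    simp only at hij
    have hm : (⟨2 * i.1, by have := hlt i.1 i.2; omega⟩ : Fin n) ∈ (medge n j.1 (hlt j.1 j.2)).1 := by
      rw [← hij, medge_fst]; simp
    rw [medge_fst] at hm
    simp only [Finset.mem_insert, Finset.mem_singleton, Fin.mk.injEq] at hm
    have : i.1 = j.1 := by omega
    exact Subtype.ext this

lemma indep_le (n : ℕ) (I : Finset (EV n))
    (hI : ∀ u ∈ I, ∀ v ∈ I, u ≠ v →
      ¬ (u ≠ v ∧ ((u : Finset (Fin n)) ∩ (v : Finset (Fin n))).Nonempty)) :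
    I.card ≤ n / 2 := by
  have hdisj : ∀ u ∈ I, ∀ v ∈ I, u ≠ v → Disjoint (u : Finset (Fin n)) (v : Finset (Fin n)) := by
    intro u hu v hv huv
    rw [Finset.disjoint_iff_inter_eq_empty, ← Finset.not_nonempty_iff_eq_empty]
    intro h
    exact hI u hu v hv huv ⟨huv, h⟩
  have key : 2 * I.card ≤ n := by
    have h1 : (I.biUnion (fun s => (s : Finset (Fin n)))).card
        = ∑ s ∈ I, (s : Finset (Fin n)).card := by
      apply Finset.card_biUnion
      intro u hu v hv huv
      exact hdisj u hu v hv huv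
    have h2 : ∑ s ∈ I, (s : Finset (Fin n)).card = 2 * I.card := by
      rw [Finset.sum_congr rfl (fun s _ => s.2), Finset.sum_const, smul_eq_mul, mul_comm]
    have h3 := Finset.card_le_univ (I.biUnion (fun s => (s : Finset (Fin n))))
    rw [h1, h2] at h3
    simpa using h3
  omega

def starC (n : ℕ) (x : Fin n) : Finset (EV n) := Finset.univ.filter (fun s => x ∈ s.1)

def lastT (n : ℕ) (hn : 4 ≤ n) : Finset (Fin n) :=
  {⟨n-3, by omega⟩, ⟨n-2, by omega⟩, ⟨n-1, by omega⟩}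

def tri (n : ℕ) (hn : 4 ≤ n) : Finset (EV n) := Finset.univ.filter (fun s => s.1 ⊆ lastT n hn)

lemma pair_card (n : ℕ) {x z : Fin n} (h : x ≠ z) : ({x, z} : Finset (Fin n)).card = 2 :=
  Finset.card_pair h

lemma cover_exists (n : ℕ) (hn : 4 ≤ n) :
    ∃ 𝒞 : Finset (Finset (EV n)), 𝒞.card = n - 2 ∧
    (∀ C ∈ 𝒞, ∀ a ∈ C, ∀ b ∈ C, a ≠ b → (a ≠ b ∧ ((a:Finset (Fin n)) ∩ b).Nonempty)) ∧
    ∀ v : EV n, ∃ C ∈ 𝒞, v ∈ C := by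
  classical
  set S : Finset (Fin n) := Finset.univ.filter (fun x : Fin n => x.1 < n - 3) with hS
  have hstar_ne_tri : ∀ x ∈ S, starC n x ≠ tri n hn := by
    intro x hx h
    rw [hS, Finset.mem_filter] at hx
    have hxw : x ≠ ⟨n-1, by omega⟩ := by intro h'; rw [Fin.ext_iff] at h'; simp at h'; omega
    set s : EV n := ⟨{x, ⟨n-1, by omega⟩}, pair_card n hxw⟩ with hs
    have h1 : s ∈ starC n x := by simp [starC, hs]
    rw [h] at h1
    simp only [tri, Finset.mem_filter, Finset.mem_univ, true_and] at h1
    have := h1 (Finset.mem_insert_self x _)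
    simp only [lastT, Finset.mem_insert, Finset.mem_singleton, Fin.ext_iff] at this
    have hx2 := hx.2
    omega
  refine ⟨insert (tri n hn) (S.image (starC n)), ?_, ?_, ?_⟩
  · rw [Finset.card_insert_of_notMem, Finset.card_image_of_injOn]
    · have hcS : S.card = n - 3 := by
        have h1 : S.image Fin.val = Finset.range (n-3) := by
          ext i
          simp only [hS, Finset.mem_image, Finset.mem_filter, Finset.mem_univ, true_and,
            Finset.mem_range]
          constructor
          · rintro ⟨x, hx, rfl⟩; exact hx
          · intro hi; exact ⟨⟨i, by omega⟩, hi, rfl⟩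
        have h2 := Finset.card_image_of_injective S (Fin.val_injective)
        rw [h1, Finset.card_range] at h2
        omega
      omega
    · intro x hx y hy hxy
      by_contra hne
      have hcard : ((Finset.univ : Finset (Fin n)) \ {x, y}).Nonempty := by
        rw [← Finset.card_pos, Finset.card_sdiff_of_subset (Finset.subset_univ _)]
        have h1 : ({x, y} : Finset (Fin n)).card ≤ 2 :=
          Finset.card_insert_le _ _ |>.trans (by simp)
        have h2 : (Finset.univ : Finset (Fin n)).card = n := by simp
        omega
      obtain ⟨z, hz0⟩ := hcard
      rw [Finset.mem_sdiff] at hz0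
      have hz := hz0.2
      simp only [Finset.mem_insert, Finset.mem_singleton, not_or] at hz
      have hxz : x ≠ z := fun h => hz.1 h.symm
      set s : EV n := ⟨{x, z}, pair_card n hxz⟩ with hs
      have h1 : s ∈ starC n x := by simp [starC, hs]
      rw [hxy] at h1
      simp only [starC, Finset.mem_filter, Finset.mem_univ, true_and, hs] at h1
      simp only [Finset.mem_insert, Finset.mem_singleton] at h1
      rcases h1 with h1 | h1
      · exact hne h1.symm
      · exact hz.2 h1.symm
    · intro hmem
      rw [Finset.mem_image] at hmem
      obtain ⟨x, hx, h⟩ := hmem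
      exact hstar_ne_tri x hx h
  · intro C hC a ha b hb hab
    refine ⟨hab, ?_⟩
    simp only [Finset.mem_insert, Finset.mem_image] at hC
    rcases hC with rfl | ⟨x, hx, rfl⟩
    · simp only [tri, Finset.mem_filter] at ha hb
      have h4 : ((a:Finset (Fin n)) ∪ b).card + ((a:Finset (Fin n)) ∩ b).card = 4 := by
        rw [Finset.card_union_add_card_inter, a.2, b.2]
      have h3 : ((a:Finset (Fin n)) ∪ b).card ≤ 3 := by
        calc _ ≤ (lastT n hn).card := Finset.card_le_card (Finset.union_subset ha.2 hb.2)
        _ ≤ 3 := by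
          apply (Finset.card_insert_le _ _).trans
          simp [lastT]
          exact Finset.card_le_two.trans_lt (by norm_num)
      rw [← Finset.card_pos]
      omega
    · simp only [starC, Finset.mem_filter] at ha hb
      exact ⟨x, Finset.mem_inter.2 ⟨ha.2, hb.2⟩⟩
  · intro v
    by_cases h : ∃ x ∈ v.1, x.1 < n - 3
    · obtain ⟨x, hxv, hx⟩ := h
      refine ⟨starC n x, ?_, ?_⟩
      · apply Finset.mem_insert_of_mem
        exact Finset.mem_image_of_mem _ (by simp [hS, hx])
      · simp [starC, hxv]
    · refine ⟨tri n hn, Finset.mem_insert_self _ _, ?_⟩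
      push_neg at h
      simp only [tri, Finset.mem_filter, Finset.mem_univ, true_and]
      intro x hx
      have h1 := h x hx
      have h2 : x.1 < n := x.2
      simp only [lastT, Finset.mem_insert, Finset.mem_singleton, Fin.ext_iff]
      omega

lemma pair_struct {n : ℕ} {s : Finset (Fin n)} (h2 : s.card = 2) {x : Fin n} (hx : x ∈ s) :
    ∃ y, y ≠ x ∧ s = {x, y} := by
  obtain ⟨p, q, hpq, rfl⟩ := Finset.card_eq_two.1 h2
  simp only [Finset.mem_insert, Finset.mem_singleton] at hx
  rcases hx with rfl | rfl
  · exact ⟨q, hpq.symm, rfl⟩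
  · exact ⟨p, hpq, Finset.pair_comm p x⟩

lemma classify {n : ℕ} (C : Finset (EV n))
    (hC : ∀ a ∈ C, ∀ b ∈ C, a ≠ b → ((a : Finset (Fin n)) ∩ (b : Finset (Fin n))).Nonempty) :
    (∃ v : Fin n, ∀ s ∈ C, v ∈ s.1) ∨ C.card ≤ 3 := by
  classical
  by_cases hex : ∃ a ∈ C, ∃ b ∈ C, a ≠ b
  · obtain ⟨a, ha, b, hb, hab⟩ := hex
    obtain ⟨x, hx⟩ := hC a ha b hb hab
    rw [Finset.mem_inter] at hx
    by_cases hall : ∀ s ∈ C, x ∈ s.1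
    · exact Or.inl ⟨x, hall⟩
    · push_neg at hall
      obtain ⟨c, hc, hxc⟩ := hall
      obtain ⟨y, hyx, hay⟩ := pair_struct a.2 hx.1
      obtain ⟨z, hzx, hbz⟩ := pair_struct b.2 hx.2
      have hca : c ≠ a := fun h => hxc (h ▸ hx.1)
      have hcb : c ≠ b := fun h => hxc (h ▸ hx.2)
      have hyc : y ∈ c.1 := by
        obtain ⟨p, hp⟩ := hC c hc a ha hca
        rw [Finset.mem_inter, hay] at hp
        simp only [Finset.mem_insert, Finset.mem_singleton] at hp
        rcases hp.2 with rfl | rfl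
        · exact absurd hp.1 hxc
        · exact hp.1
      have hzc : z ∈ c.1 := by
        obtain ⟨p, hp⟩ := hC c hc b hb hcb
        rw [Finset.mem_inter, hbz] at hp
        simp only [Finset.mem_insert, Finset.mem_singleton] at hp
        rcases hp.2 with rfl | rfl
        · exact absurd hp.1 hxc
        · exact hp.1
      have hyz : y ≠ z := by
        rintro rfl
        exact hab (Subtype.ext (by rw [hay, hbz]))
      have hcyz : c.1 = {y, z} := by
        symm
        apply Finset.eq_of_subset_of_card_le
        · intro w hw
          simp only [Finset.mem_insert, Finset.mem_singleton] at hw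
          rcases hw with rfl | rfl
          exacts [hyc, hzc]
        · rw [c.2, Finset.card_pair hyz]
      set T : Finset (Fin n) := {x, y, z} with hT
      have hsub : ∀ s ∈ C, s.1 ⊆ T := by
        intro s hs w hw
        by_contra hwT
        have hwx : w ≠ x := fun h => hwT (h ▸ Finset.mem_insert_self x _)
        have hwy : w ≠ y := fun h => hwT (by rw [h, hT]; simp)
        have hwz : w ≠ z := fun h => hwT (by rw [h, hT]; simp)
        have hsa : s ≠ a := by
          rintro rfl
          rw [hay] at hw
          simp only [Finset.mem_insert, Finset.mem_singleton] at hw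
          rcases hw with rfl | rfl
          exacts [hwx rfl, hwy rfl]
        have hsb : s ≠ b := by
          rintro rfl
          rw [hbz] at hw
          simp only [Finset.mem_insert, Finset.mem_singleton] at hw
          rcases hw with rfl | rfl
          exacts [hwx rfl, hwz rfl]
        have hsc : s ≠ c := by
          rintro rfl
          rw [hcyz] at hw
          simp only [Finset.mem_insert, Finset.mem_singleton] at hw
          rcases hw with rfl | rfl
          exacts [hwy rfl, hwz rfl]
        obtain ⟨u, hux, hsu⟩ := pair_struct s.2 hw
        have hmem : ∀ t : EV n, t ∈ C → t ≠ s → ∃ p ∈ s.1, p ∈ t.1 := by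
          intro t ht hts
          obtain ⟨p, hp⟩ := hC s hs t ht (fun h => hts (h.symm))
          rw [Finset.mem_inter] at hp
          exact ⟨p, hp.1, hp.2⟩
        have hua : u ∈ a.1 := by
          obtain ⟨p, hps, hpa⟩ := hmem a ha (fun h => hsa h.symm)
          rw [hsu] at hps
          simp only [Finset.mem_insert, Finset.mem_singleton] at hps
          rcases hps with rfl | rfl
          · rw [hay] at hpa
            simp only [Finset.mem_insert, Finset.mem_singleton] at hpa
            rcases hpa with rfl | rfl
            exacts [absurd rfl hwx, absurd rfl hwy]
          · exact hpa
        have hub : u ∈ b.1 := by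
          obtain ⟨p, hps, hpb⟩ := hmem b hb (fun h => hsb h.symm)
          rw [hsu] at hps
          simp only [Finset.mem_insert, Finset.mem_singleton] at hps
          rcases hps with rfl | rfl
          · rw [hbz] at hpb
            simp only [Finset.mem_insert, Finset.mem_singleton] at hpb
            rcases hpb with rfl | rfl
            exacts [absurd rfl hwx, absurd rfl hwz]
          · exact hpb
        have huc : u ∈ c.1 := by
          obtain ⟨p, hps, hpc⟩ := hmem c hc (fun h => hsc h.symm)
          rw [hsu] at hps
          simp only [Finset.mem_insert, Finset.mem_singleton] at hps
          rcases hps with rfl | rfl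
          · rw [hcyz] at hpc
            simp only [Finset.mem_insert, Finset.mem_singleton] at hpc
            rcases hpc with rfl | rfl
            exacts [absurd rfl hwy, absurd rfl hwz]
          · exact hpc
        rw [hay] at hua
        rw [hbz] at hub
        rw [hcyz] at huc
        simp only [Finset.mem_insert, Finset.mem_singleton] at hua hub huc
        have hux' : u = x := by
          rcases hua with rfl | rfl
          · rfl
          · rcases hub with rfl | h
            · rfl
            · exact absurd h hyz
        subst hux'
        rcases huc with h | h
        · exact hyx h.symm
        · exact hzx h.symm
      right
      have hinj : (C.image (fun s : EV n => s.1)).card = C.card :=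
        Finset.card_image_of_injective _ Subtype.val_injective
      have himg : C.image (fun s : EV n => s.1) ⊆ T.powersetCard 2 := by
        intro t ht
        rw [Finset.mem_image] at ht
        obtain ⟨s, hs, rfl⟩ := ht
        rw [Finset.mem_powersetCard]
        exact ⟨hsub s hs, s.2⟩
      have hTcard : T.card ≤ 3 := by
        apply (Finset.card_insert_le _ _).trans
        have : ({y, z} : Finset (Fin n)).card ≤ 2 :=
          (Finset.card_insert_le _ _).trans (by simp)
        omega
      calc C.card = (C.image (fun s : EV n => s.1)).card := hinj.symm
        _ ≤ (T.powersetCard 2).card := Finset.card_le_card himg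
        _ = T.card.choose 2 := Finset.card_powersetCard 2 T
        _ ≤ 3 := by interval_cases h : T.card <;> decide
  · right
    push_neg at hex
    have : C.card ≤ 1 := Finset.card_le_one.2 (fun a ha b hb => hex a ha b hb)
    omega

lemma quad (m : ℕ) : 6 * (m - 2) ≤ m * (m - 1) := by
  rcases Nat.lt_or_ge m 5 with h | h
  · interval_cases m <;> omega
  · nlinarith [Nat.sub_add_cancel (by omega : 1 ≤ m), Nat.sub_add_cancel (by omega : 2 ≤ m)]

lemma mul_pred_eq (m : ℕ) : m * (m - 1) = 2 * (m.choose 2) := by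
  rcases m with _ | m'
  · simp
  · obtain ⟨k, hk⟩ := Nat.even_mul_succ_self m'
    rw [Nat.choose_two_right]
    simp only [Nat.succ_sub_one]
    rw [Nat.mul_comm (m' + 1) m', hk]
    omega

lemma cover_lower (n : ℕ) (hn : 4 ≤ n) (𝒞 : Finset (Finset (EV n)))
    (hclique : ∀ C ∈ 𝒞, ∀ a ∈ C, ∀ b ∈ C, a ≠ b →
      ((a:Finset (Fin n)) ∩ (b:Finset (Fin n))).Nonempty)
    (hcover : ∀ v : EV n, ∃ C ∈ 𝒞, v ∈ C) :
    n - 2 ≤ 𝒞.card := by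
  classical
  set P : Finset (EV n) → Prop := fun C => ∃ v : Fin n, ∀ s ∈ C, v ∈ s.1 with hP
  set 𝒮 := 𝒞.filter (fun C => P C) with h𝒮
  set 𝒯 := 𝒞.filter (fun C => ¬ P C) with h𝒯
  have hsplit : 𝒮.card + 𝒯.card = 𝒞.card := Finset.card_filter_add_card_filter_not _
  set ctr : Finset (EV n) → Fin n := fun C =>
    if h : P C then h.choose else ⟨0, by omega⟩ with hctr
  have hctrspec : ∀ C, P C → ∀ s ∈ C, ctr C ∈ s.1 := by
    intro C hPC s hs
    rw [hctr]
    simp only [hPC, dif_pos]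
    exact hPC.choose_spec s hs
  set S := 𝒮.image ctr with hSdef
  have hScard : S.card ≤ 𝒮.card := Finset.card_image_le
  set m := n - S.card with hm
  set P2 := ((Finset.univ : Finset (Fin n)) \ S).powersetCard 2 with hP2
  have hP2card : P2.card = m.choose 2 := by
    rw [hP2, Finset.card_powersetCard, Finset.card_sdiff_of_subset (Finset.subset_univ _)]
    simp [hm]
  set F : Finset (EV n) := P2.attach.image
    (fun t => (⟨t.1, (Finset.mem_powersetCard.1 t.2).2⟩ : EV n)) with hF
  have hFcard : F.card = m.choose 2 := by
    rw [hF, Finset.card_image_of_injective, Finset.card_attach, hP2card]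
    intro t u htu
    simp only [Subtype.mk.injEq] at htu
    exact Subtype.ext htu
  have hFsub : F ⊆ 𝒯.biUnion id := by
    intro e he
    rw [hF, Finset.mem_image] at he
    obtain ⟨t, _, rfl⟩ := he
    have havoid : ∀ v ∈ S, v ∉ (t.1 : Finset (Fin n)) := by
      intro v hv hvt
      have := (Finset.mem_powersetCard.1 t.2).1 hvt
      rw [Finset.mem_sdiff] at this
      exact this.2 hv
    obtain ⟨C, hC𝒞, heC⟩ := hcover ⟨t.1, (Finset.mem_powersetCard.1 t.2).2⟩
    have hCT : C ∈ 𝒯 := by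
      rw [h𝒯, Finset.mem_filter]
      refine ⟨hC𝒞, fun hPC => ?_⟩
      have h1 : ctr C ∈ S := by
        rw [hSdef]
        exact Finset.mem_image_of_mem _ (by rw [h𝒮, Finset.mem_filter]; exact ⟨hC𝒞, hPC⟩)
      exact havoid _ h1 (hctrspec C hPC _ heC)
    exact Finset.mem_biUnion.2 ⟨C, hCT, heC⟩
  have hcount : m.choose 2 ≤ 3 * 𝒯.card := by
    calc m.choose 2 = F.card := hFcard.symm
      _ ≤ (𝒯.biUnion id).card := Finset.card_le_card hFsub
      _ ≤ ∑ C ∈ 𝒯, C.card := Finset.card_biUnion_le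
      _ ≤ ∑ _C ∈ 𝒯, 3 := by
          apply Finset.sum_le_sum
          intro C hC
          rw [h𝒯, Finset.mem_filter] at hC
          rcases classify C (hclique C hC.1) with h | h
          · exact absurd h hC.2
          · exact h
      _ = 3 * 𝒯.card := by rw [Finset.sum_const, smul_eq_mul, mul_comm]
  have hq := quad m
  have hme := mul_pred_eq m
  omega

/-- For `n ≥ 4`, the line graph `G` of the complete graph on
`n` vertices satisfies `α(G) = ⌊n/2⌋` and `χ̄(G) = n - 2`. -/
theorem stmt14 (n : ℕ) (hn : 4 ≤ n) :
    indepNum (lineOfComplete n) = n / 2 ∧ cliqueCoverNum (lineOfComplete n) = n - 2 := by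
  have hAdj : ∀ a b : EV n, (lineOfComplete n).Adj a b ↔
      (a ≠ b ∧ ((a : Finset (Fin n)) ∩ (b : Finset (Fin n))).Nonempty) := fun a b => Iff.rfl
  constructor
  · -- independence number
    rw [indepNum]
    apply le_antisymm
    · apply csSup_le
      · obtain ⟨I, hI, hc⟩ := indep_exists n hn
        exact ⟨n / 2, I, fun u hu v hv huv => by rw [hAdj]; exact hI u hu v hv huv, hc⟩
      · rintro k ⟨I, hI, rfl⟩
        exact indep_le n I (fun u hu v hv huv h => hI u hu v hv huv ((hAdj u v).2 h))
    · apply le_csSup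
      · refine ⟨n / 2, ?_⟩
        rintro k ⟨I, hI, rfl⟩
        exact indep_le n I (fun u hu v hv huv h => hI u hu v hv huv ((hAdj u v).2 h))
      · obtain ⟨I, hI, hc⟩ := indep_exists n hn
        exact ⟨I, fun u hu v hv huv => by rw [hAdj]; exact hI u hu v hv huv, hc⟩
  · -- clique cover number
    rw [cliqueCoverNum]
    have hmem : (n - 2) ∈ {k | ∃ 𝒞 : Finset (Finset (EV n)), 𝒞.card = k ∧
        (∀ C ∈ 𝒞, (lineOfComplete n).IsClique (C : Set (EV n))) ∧
        ∀ v : EV n, ∃ C ∈ 𝒞, v ∈ C} := by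
      obtain ⟨𝒞, hc, hcl, hcov⟩ := cover_exists n hn
      refine ⟨𝒞, hc, ?_, hcov⟩
      intro C hC a ha b hb hab
      rw [hAdj]
      exact hcl C hC a ha b hb hab
    apply le_antisymm
    · exact Nat.sInf_le hmem
    · apply le_csInf ⟨n - 2, hmem⟩
      rintro k ⟨𝒞, rfl, hcl, hcov⟩
      apply cover_lower n hn 𝒞 ?_ hcov
      intro C hC a ha b hb hab
      exact ((hAdj a b).1 (hcl C hC ha hb hab)).2
end

section
/- There exists a constant c > 0 such that for every instance H of the generalized index coding problem with n ≥ 2 symbols and m ≥ n receivers (such that for each i ∈ {1,…,n} there exists some j ∈ {1,…,m} with r(j) = i), there exists an index code for H over the alphabet {0,1} of length at most c · (m / log n) · MES(H). -/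
/-- A generalized index code of length `L` over `{0,1}` (modeled by `Bool`) for
the instance with `n` symbols, `m` receivers, request map `r` and side
information map `N`: an encoding function `E` such that each receiver `j` can
decode `x (r j)` from `E x` and the restriction of `x` to `N j`. -/
def IsGenIndexCode (n m L : ℕ) (r : Fin m → Fin n) (N : Fin m → Set (Fin n))
    (E : (Fin n → Bool) → Fin L → Bool) : Prop :=
  ∀ j : Fin m, ∃ g : (Fin L → Bool) → ({i : Fin n // i ∈ N j} → Bool) → Bool,
    ∀ x : Fin n → Bool, g (E x) (fun i => x i.1) = x (r j)

/-- β₁: the smallest length of a generalized index code over `{0,1}`. -/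
noncomputable def genBetaOne (n m : ℕ) (r : Fin m → Fin n) (N : Fin m → Set (Fin n)) : ℕ :=
  sInf {L | ∃ E : (Fin n → Bool) → Fin L → Bool, IsGenIndexCode n m L r N E}

/-- An expanding sequence of size `k`: a sequence of `k` distinct receivers
`σ 0, …, σ (k-1)` such that for each `ℓ`, the symbol requested by receiver
`σ ℓ` is unknown to the receivers `σ t` with `t < ℓ`. -/
def IsExpandingSeq (n m : ℕ) (r : Fin m → Fin n) (N : Fin m → Set (Fin n))
    (k : ℕ) (σ : Fin k → Fin m) : Prop :=
  Function.Injective σ ∧ ∀ ℓ t : Fin k, t < ℓ → r (σ ℓ) ∉ N (σ t)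

/-- MES: the maximum size of an expanding sequence. -/
noncomputable def MES (n m : ℕ) (r : Fin m → Fin n) (N : Fin m → Set (Fin n)) : ℕ :=
  sSup {k | ∃ σ : Fin k → Fin m, IsExpandingSeq n m r N k σ}

section Aux

variable {n m : ℕ} (r : Fin m → Fin n) (N : Fin m → Set (Fin n))

/-- A list of receivers forming an expanding sequence (in chronological order). -/
def ExpList (l : List (Fin m)) : Prop :=
  l.Nodup ∧ l.Pairwise (fun a b => r b ∉ N a)

/-- A set of receivers that can all be served by a single XOR bit. -/
def CliqueSet (C : Finset (Fin m)) : Prop :=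
  ∀ a ∈ C, ∀ b ∈ C, a ≠ b → r a ∈ N b ∨ r a = r b

theorem ramsey : ∀ (k q : ℕ) (S : Finset (Fin m)), 6 ^ k * 2 ^ q < S.card →
    (∃ l : List (Fin m), (∀ x ∈ l, x ∈ S) ∧ ExpList r N l ∧ l.length = k + 1) ∨
    (∃ C : Finset (Fin m), C ⊆ S ∧ CliqueSet r N C ∧ C.card = q + 1) := by
  intro k
  induction k with
  | zero =>
    intro q S hS
    have hpos : 0 < S.card := lt_of_le_of_lt (Nat.zero_le _) hS
    obtain ⟨j, hj⟩ := Finset.card_pos.mp hpos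
    exact Or.inl ⟨[j], by simpa using hj, ⟨by simp, by simp⟩, rfl⟩
  | succ k ihk =>
    intro q
    induction q with
    | zero =>
      intro S hS
      have hpos : 0 < S.card := lt_of_le_of_lt (Nat.zero_le _) hS
      obtain ⟨j, hj⟩ := Finset.card_pos.mp hpos
      refine Or.inr ⟨{j}, by simpa using hj, ?_, by simp⟩
      intro a ha b hb hab
      simp only [Finset.mem_singleton] at ha hb
      exact absurd (ha.trans hb.symm) hab
    | succ q ihq =>
      intro S hS
      classical
      have hpos : 0 < S.card := lt_of_le_of_lt (Nat.zero_le _) hS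
      obtain ⟨j, hjS⟩ := Finset.card_pos.mp hpos
      set P1 : Fin m → Prop := fun j' => r j' ∈ N j ∨ r j' = r j with hP1
      set P2 : Fin m → Prop := fun j' => r j ∈ N j' ∨ r j = r j' with hP2
      set A := S.filter (fun j' => j' ≠ j ∧ ¬ P1 j') with hA
      set Cc := S.filter (fun j' => j' ≠ j ∧ P1 j' ∧ ¬ P2 j') with hCc
      set B := S.filter (fun j' => j' ≠ j ∧ P1 j' ∧ P2 j') with hB
      have hcover : S ⊆ insert j (A ∪ Cc ∪ B) := by
        intro x hx
        by_cases hxj : x = j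
        · simp [hxj]
        · simp only [Finset.mem_insert, Finset.mem_union, hA, hCc, hB, Finset.mem_filter]
          by_cases h1 : P1 x <;> by_cases h2 : P2 x <;> tauto
      have hcardle : S.card ≤ 1 + (A.card + Cc.card + B.card) := by
        calc S.card ≤ (insert j (A ∪ Cc ∪ B)).card := Finset.card_le_card hcover
          _ ≤ (A ∪ Cc ∪ B).card + 1 := Finset.card_insert_le _ _
          _ ≤ (A ∪ Cc).card + B.card + 1 := by
              have := Finset.card_union_le (A ∪ Cc) B
              omega
          _ ≤ A.card + Cc.card + B.card + 1 := by
              have := Finset.card_union_le A Cc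
              omega
          _ = 1 + (A.card + Cc.card + B.card) := by omega
      by_cases hAbig : 6 ^ k * 2 ^ (q + 1) < A.card
      · rcases ihk (q + 1) A hAbig with ⟨l, hlA, ⟨hnd, hpw⟩, hlen⟩ | ⟨C, hCA, hclq, hcard⟩
        · left
          have hjnl : j ∉ l := by
            intro hjl
            have := hlA j hjl
            rw [hA, Finset.mem_filter] at this
            exact this.2.1 rfl
          refine ⟨j :: l, ?_, ⟨?_, ?_⟩, by simp [hlen]⟩
          · intro x hx
            rcases List.mem_cons.mp hx with h | h
            · exact h ▸ hjS
            · exact Finset.filter_subset _ _ (hlA x h)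
          · exact List.nodup_cons.mpr ⟨hjnl, hnd⟩
          · refine List.pairwise_cons.mpr ⟨?_, hpw⟩
            intro b hb
            have := hlA b hb
            rw [hA, Finset.mem_filter] at this
            intro hmem
            exact this.2.2 (Or.inl hmem)
        · exact Or.inr ⟨C, hCA.trans (Finset.filter_subset _ _), hclq, hcard⟩
      · by_cases hCbig : 6 ^ k * 2 ^ (q + 1) < Cc.card
        · rcases ihk (q + 1) Cc hCbig with ⟨l, hlC, ⟨hnd, hpw⟩, hlen⟩ | ⟨C, hCC, hclq, hcard⟩
          · left
            have hjnl : j ∉ l := by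
              intro hjl
              have := hlC j hjl
              rw [hCc, Finset.mem_filter] at this
              exact this.2.1 rfl
            refine ⟨l ++ [j], ?_, ⟨?_, ?_⟩, by simp [hlen]⟩
            · intro x hx
              rcases List.mem_append.mp hx with h | h
              · exact Finset.filter_subset _ _ (hlC x h)
              · simp only [List.mem_singleton] at h
                exact h ▸ hjS
            · simp [List.nodup_append, hnd, hjnl]
              exact fun a ha h => hjnl (h ▸ ha)
            · rw [List.pairwise_append]
              refine ⟨hpw, List.pairwise_singleton _ _, ?_⟩
              intro a ha b hb
              simp only [List.mem_singleton] at hb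
              subst hb
              have := hlC a ha
              rw [hCc, Finset.mem_filter] at this
              intro hmem
              exact this.2.2.2 (Or.inl hmem)
          · exact Or.inr ⟨C, hCC.trans (Finset.filter_subset _ _), hclq, hcard⟩
        · by_cases hBbig : 6 ^ (k + 1) * 2 ^ q < B.card
          · rcases ihq B hBbig with ⟨l, hlB, hexp, hlen⟩ | ⟨C, hCB, hclq, hcard⟩
            · exact Or.inl ⟨l, fun x hx => Finset.filter_subset _ _ (hlB x hx), hexp, hlen⟩
            · right
              have hjC : j ∉ C := by
                intro hjc
                have := hCB hjc
                rw [hB, Finset.mem_filter] at this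
                exact this.2.1 rfl
              refine ⟨insert j C, ?_, ?_, by rw [Finset.card_insert_of_notMem hjC, hcard]⟩
              · intro x hx
                rcases Finset.mem_insert.mp hx with h | h
                · exact h ▸ hjS
                · exact Finset.filter_subset _ _ (hCB h)
              · intro a ha b hb hab
                rcases Finset.mem_insert.mp ha with ha' | ha' <;>
                  rcases Finset.mem_insert.mp hb with hb' | hb'
                · exact absurd (ha'.trans hb'.symm) hab
                · subst ha'
                  have := hCB hb'
                  rw [hB, Finset.mem_filter] at this
                  exact this.2.2.2
                · subst hb'
                  have := hCB ha'
                  rw [hB, Finset.mem_filter] at this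
                  exact this.2.2.1
                · exact hclq a ha' b hb' hab
          · exfalso
            push_neg at hAbig hCbig hBbig
            have hX : 1 ≤ 6 ^ k * 2 ^ q := Nat.one_le_iff_ne_zero.mpr (by positivity)
            have e1 : 6 ^ k * 2 ^ (q + 1) = 2 * (6 ^ k * 2 ^ q) := by ring
            have e2 : 6 ^ (k + 1) * 2 ^ q = 6 * (6 ^ k * 2 ^ q) := by ring
            have e3 : 6 ^ (k + 1) * 2 ^ (q + 1) = 12 * (6 ^ k * 2 ^ q) := by ring
            omega

/-- Guaranteed clique size in a set of `u` receivers when `MES ≤ K`. -/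
def QQ (K u : ℕ) : ℕ := Nat.log 2 ((u - 1) / 6 ^ K) + 1

lemma QQ_pos (K u : ℕ) : 0 < QQ K u := Nat.succ_pos _

lemma QQ_mono (K : ℕ) {u v : ℕ} (h : u ≤ v) : QQ K u ≤ QQ K v := by
  unfold QQ
  have h1 : (u - 1) / 6 ^ K ≤ (v - 1) / 6 ^ K := Nat.div_le_div_right (by omega)
  exact Nat.succ_le_succ (Nat.log_mono_right h1)

theorem greedy (K : ℕ) (hseq : ∀ l : List (Fin m), ExpList r N l → l.length ≤ K) :
    ∀ (s : ℕ) (S : Finset (Fin m)), S.card ≤ s →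
    ∃ 𝒞 : Finset (Finset (Fin m)), (∀ C ∈ 𝒞, CliqueSet r N C) ∧
      (∀ j ∈ S, ∃ C ∈ 𝒞, j ∈ C) ∧
      (𝒞.card : ℝ) ≤ ∑ u ∈ Finset.Ioc 0 S.card, (1 : ℝ) / (QQ K u) := by
  intro s
  induction s with
  | zero =>
    intro S hS
    have : S = ∅ := Finset.card_eq_zero.mp (Nat.le_zero.mp hS)
    subst this
    exact ⟨∅, by simp, by simp, by simp⟩
  | succ s ih =>
    intro S hS
    classical
    by_cases hS0 : S = ∅
    · subst hS0
      refine ⟨∅, by simp, by simp, ?_⟩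
      simp only [Finset.card_empty, Nat.cast_zero]
      apply Finset.sum_nonneg
      intro u _
      positivity
    · set s' := S.card with hs'
      have hs'pos : 1 ≤ s' := Finset.card_pos.mpr (Finset.nonempty_iff_ne_empty.mpr hS0)
      -- obtain a clique of size QQ K s' inside S
      have hclique : ∃ C : Finset (Fin m), C ⊆ S ∧ CliqueSet r N C ∧ C.card = QQ K s' := by
        by_cases h0 : (s' - 1) / 6 ^ K = 0
        · obtain ⟨j, hj⟩ := Finset.nonempty_iff_ne_empty.mpr hS0
          refine ⟨{j}, by simpa using hj, ?_, by simp [QQ, h0]⟩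
          intro a ha b hb hab
          simp only [Finset.mem_singleton] at ha hb
          exact absurd (ha.trans hb.symm) hab
        · set q := Nat.log 2 ((s' - 1) / 6 ^ K) with hq
          have h2q : 2 ^ q ≤ (s' - 1) / 6 ^ K := Nat.pow_log_le_self 2 h0
          have hlt : 6 ^ K * 2 ^ q < s' := by
            have h1 : 6 ^ K * 2 ^ q ≤ 6 ^ K * ((s' - 1) / 6 ^ K) :=
              Nat.mul_le_mul_left _ h2q
            have h2 : 6 ^ K * ((s' - 1) / 6 ^ K) ≤ s' - 1 := Nat.mul_div_le _ _
            omega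
          rcases ramsey r N K q S hlt with ⟨l, _, hexp, hlen⟩ | ⟨C, hCS, hclq, hcard⟩
          · exact absurd (hseq l hexp) (by omega)
          · exact ⟨C, hCS, hclq, by rw [hcard, QQ]⟩
      obtain ⟨C, hCS, hclq, hCcard⟩ := hclique
      have hQle : QQ K s' ≤ s' := hCcard ▸ (Finset.card_le_card hCS)
      set a := s' - QQ K s' with ha
      have hS'card : (S \ C).card = a := by
        rw [Finset.card_sdiff_of_subset hCS, hCcard]
      have hale : (S \ C).card ≤ s := by
        rw [hS'card]
        have := QQ_pos K s'
        omega
      obtain ⟨𝒞', hclq', hcov', hbound'⟩ := ih (S \ C) hale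
      refine ⟨insert C 𝒞', ?_, ?_, ?_⟩
      · intro D hD
        rcases Finset.mem_insert.mp hD with h | h
        · exact h ▸ hclq
        · exact hclq' D h
      · intro j hj
        by_cases hjC : j ∈ C
        · exact ⟨C, Finset.mem_insert_self _ _, hjC⟩
        · obtain ⟨D, hD, hjD⟩ := hcov' j (Finset.mem_sdiff.mpr ⟨hj, hjC⟩)
          exact ⟨D, Finset.mem_insert_of_mem hD, hjD⟩
      · -- cardinality bound
        have hstep : (1 : ℝ) + ∑ u ∈ Finset.Ioc 0 a, (1 : ℝ) / (QQ K u)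
            ≤ ∑ u ∈ Finset.Ioc 0 s', (1 : ℝ) / (QQ K u) := by
          have hsplit : ∑ u ∈ Finset.Ioc 0 a, (1 : ℝ) / (QQ K u)
              + ∑ u ∈ Finset.Ioc a s', (1 : ℝ) / (QQ K u)
              = ∑ u ∈ Finset.Ioc 0 s', (1 : ℝ) / (QQ K u) :=
            Finset.sum_Ioc_consecutive _ (Nat.zero_le a) (by omega)
          have hcard2 : (Finset.Ioc a s').card = QQ K s' := by
            rw [Nat.card_Ioc]; omega
          have hterm : ∀ u ∈ Finset.Ioc a s', (1 : ℝ) / (QQ K s') ≤ (1 : ℝ) / (QQ K u) := by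
            intro u hu
            rw [Finset.mem_Ioc] at hu
            apply one_div_le_one_div_of_le
            · exact_mod_cast QQ_pos K u
            · exact_mod_cast QQ_mono K hu.2
          have h1 : (1 : ℝ) ≤ ∑ u ∈ Finset.Ioc a s', (1 : ℝ) / (QQ K u) := by
            calc (1 : ℝ) = (Finset.Ioc a s').card * ((1 : ℝ) / (QQ K s')) := by
                  rw [hcard2, mul_one_div,
                    div_self (by exact_mod_cast (QQ_pos K s').ne' : (QQ K s' : ℝ) ≠ 0)]
              _ ≤ ∑ u ∈ Finset.Ioc a s', (1 : ℝ) / (QQ K u) := by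
                  rw [Finset.card_eq_sum_ones (Finset.Ioc a s'), Nat.cast_sum,
                    Finset.sum_mul]
                  apply Finset.sum_le_sum
                  intro u hu
                  simpa using hterm u hu
          linarith
        have hins : ((insert C 𝒞').card : ℝ) ≤ (𝒞'.card : ℝ) + 1 := by
          have := Finset.card_insert_le C 𝒞'
          exact_mod_cast this
        rw [hS'card] at hbound'
        linarith

private lemma zmod_boolify (a : ZMod 2) :
    (if (decide (a = 1)) = true then (1 : ZMod 2) else 0) = a := by
  revert a; decide

theorem code_of_cover (𝒞 : Finset (Finset (Fin m)))
    (hclq : ∀ C ∈ 𝒞, CliqueSet r N C) (hcov : ∀ j, ∃ C ∈ 𝒞, j ∈ C) :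
    ∃ E : (Fin n → Bool) → Fin 𝒞.card → Bool, IsGenIndexCode n m 𝒞.card r N E := by
  classical
  set e := 𝒞.equivFin with he
  refine ⟨fun x l => decide
    ((∑ i ∈ (((e.symm l) : Finset (Fin m)).image r), (if x i then (1 : ZMod 2) else 0)) = 1), ?_⟩
  intro j
  obtain ⟨C, hC𝒞, hjC⟩ := hcov j
  set l₀ := e ⟨C, hC𝒞⟩ with hl₀
  refine ⟨fun y z => decide ((if y l₀ then (1 : ZMod 2) else 0) +
      ∑ i ∈ (C.image r).erase (r j),
        (if h : i ∈ N j then (if z ⟨i, h⟩ then (1 : ZMod 2) else 0) else 0) = 1), ?_⟩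
  intro x
  have heC : ((e.symm l₀ : Finset (Fin m))) = C := by rw [hl₀, Equiv.symm_apply_apply]
  have hmemN : ∀ i ∈ (C.image r).erase (r j), i ∈ N j := by
    intro i hi
    obtain ⟨hine, him⟩ := Finset.mem_erase.mp hi
    obtain ⟨j', hj'C, hrj'⟩ := Finset.mem_image.mp him
    have hjj' : j' ≠ j := fun h => hine (by rw [← hrj', h])
    rcases hclq C hC𝒞 j' hj'C j hjC hjj' with h | h
    · exact hrj' ▸ h
    · exact absurd (hrj' ▸ h) hine
  have hz : ∑ i ∈ (C.image r).erase (r j),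
      (if h : i ∈ N j then (if x i then (1 : ZMod 2) else 0) else 0)
      = ∑ i ∈ (C.image r).erase (r j), (if x i then (1 : ZMod 2) else 0) := by
    apply Finset.sum_congr rfl
    intro i hi
    rw [dif_pos (hmemN i hi)]
  have hsum : (∑ i ∈ C.image r, (if x i then (1 : ZMod 2) else 0))
      = (if x (r j) then (1 : ZMod 2) else 0)
        + ∑ i ∈ (C.image r).erase (r j), (if x i then (1 : ZMod 2) else 0) :=
    (Finset.add_sum_erase _ _ (Finset.mem_image_of_mem r hjC)).symm
  simp only [heC, hz, zmod_boolify]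
  rw [hsum, add_assoc, CharTwo.add_self_eq_zero, add_zero]
  cases hx : x (r j) <;> simp [hx]

theorem trivialCode' : IsGenIndexCode n m n r N (fun x => x) :=
  fun j => ⟨fun y _ => y (r j), fun _ => rfl⟩

lemma bddAboveSeq : BddAbove {k | ∃ σ : Fin k → Fin m, IsExpandingSeq n m r N k σ} := by
  refine ⟨m, fun k hk => ?_⟩
  obtain ⟨σ, hσ⟩ := hk
  simpa using Fintype.card_le_of_injective σ hσ.1

lemma one_le_mes (hm : 0 < m) : 1 ≤ MES n m r N := by
  apply le_csSup (bddAboveSeq r N)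
  refine ⟨fun _ => ⟨0, hm⟩, fun a b _ => Subsingleton.elim a b, ?_⟩
  intro ℓ t hlt
  have : t = ℓ := Subsingleton.elim t ℓ
  exact absurd hlt (this ▸ lt_irrefl ℓ)

lemma length_le_mes (l : List (Fin m)) (h : ExpList r N l) : l.length ≤ MES n m r N := by
  apply le_csSup (bddAboveSeq r N)
  refine ⟨l.get, List.nodup_iff_injective_get.mp h.1, ?_⟩
  intro ℓ t hlt
  exact List.pairwise_iff_get.mp h.2 t ℓ hlt

end Aux

lemma phi_le (K t s : ℕ) :
    ∑ u ∈ Finset.Ioc 0 s, (1 : ℝ) / (QQ K u)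
      ≤ ((6 ^ K * 2 ^ t : ℕ) : ℝ) + (s : ℝ) * (1 / ((t : ℝ) + 1)) := by
  classical
  set U := 6 ^ K * 2 ^ t with hU
  have hterm : ∀ u ∈ Finset.Ioc 0 s, (1 : ℝ) / (QQ K u)
      ≤ (if u ≤ U then (1 : ℝ) else 0) + 1 / ((t : ℝ) + 1) := by
    intro u _
    by_cases hle : u ≤ U
    · rw [if_pos hle]
      have h1 : (1 : ℝ) ≤ (QQ K u : ℝ) := by exact_mod_cast QQ_pos K u
      have h2 : (1 : ℝ) / (QQ K u) ≤ 1 := by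
        rw [div_le_one (by linarith)]; linarith
      have h3 : (0 : ℝ) ≤ 1 / ((t : ℝ) + 1) := by positivity
      linarith
    · rw [if_neg hle]
      push_neg at hle
      have hQ : t + 1 ≤ QQ K u := by
        unfold QQ
        have h6 : 0 < 6 ^ K := by positivity
        have h2 : 2 ^ t ≤ (u - 1) / 6 ^ K := by
          rw [Nat.le_div_iff_mul_le h6]
          have : 2 ^ t * 6 ^ K = U := by rw [hU]; ring
          omega
        have hne : (u - 1) / 6 ^ K ≠ 0 := by
          have : 0 < 2 ^ t := by positivity
          omega
        have := (Nat.le_log_iff_pow_le (by norm_num) hne).mpr h2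
        omega
      have h4 : ((t : ℝ) + 1) ≤ (QQ K u : ℝ) := by exact_mod_cast hQ
      have h5 : (1 : ℝ) / (QQ K u) ≤ 1 / ((t : ℝ) + 1) :=
        one_div_le_one_div_of_le (by positivity) h4
      linarith
  calc ∑ u ∈ Finset.Ioc 0 s, (1 : ℝ) / (QQ K u)
      ≤ ∑ u ∈ Finset.Ioc 0 s, ((if u ≤ U then (1 : ℝ) else 0) + 1 / ((t : ℝ) + 1)) :=
        Finset.sum_le_sum hterm
    _ = (∑ u ∈ Finset.Ioc 0 s, (if u ≤ U then (1 : ℝ) else 0))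
        + (s : ℝ) * (1 / ((t : ℝ) + 1)) := by
        rw [Finset.sum_add_distrib, Finset.sum_const, Nat.card_Ioc, nsmul_eq_mul]
        simp
    _ ≤ ((U : ℕ) : ℝ) + (s : ℝ) * (1 / ((t : ℝ) + 1)) := by
        have h1 : (∑ u ∈ Finset.Ioc 0 s, (if u ≤ U then (1 : ℝ) else 0))
            = (((Finset.Ioc 0 s).filter (fun u => u ≤ U)).card : ℝ) :=
          Finset.sum_boole _ _
        have h2 : ((Finset.Ioc 0 s).filter (fun u => u ≤ U)) ⊆ Finset.Ioc 0 U := by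
          intro u hu
          simp only [Finset.mem_filter, Finset.mem_Ioc] at hu ⊢
          exact ⟨hu.1.1, hu.2⟩
        have h3 : ((Finset.Ioc 0 s).filter (fun u => u ≤ U)).card ≤ U := by
          have := Finset.card_le_card h2
          simpa [Nat.card_Ioc] using this
        rw [h1]
        have : (((Finset.Ioc 0 s).filter (fun u => u ≤ U)).card : ℝ) ≤ (U : ℝ) := by
          exact_mod_cast h3
        linarith

theorem stmt19 : ∃ c : ℝ, 0 < c ∧
    ∀ (n m : ℕ) (r : Fin m → Fin n) (N : Fin m → Set (Fin n)),
      2 ≤ n → n ≤ m → (∀ j, r j ∉ N j) → (∀ i : Fin n, ∃ j : Fin m, r j = i) →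
      ∃ (L : ℕ) (E : (Fin n → Bool) → Fin L → Bool),
        IsGenIndexCode n m L r N E ∧
        (L : ℝ) ≤ c * ((m : ℝ) / Real.log (n : ℝ)) * (MES n m r N : ℝ) := by
  classical
  refine ⟨8, by norm_num, ?_⟩
  intro n m r N hn hnm hrN hreq
  have hm1 : 0 < m := by omega
  set K := MES n m r N with hKdef
  have hK1 : 1 ≤ K := one_le_mes r N hm1
  have hn0 : (0 : ℝ) < n := by exact_mod_cast (by omega : 0 < n)
  have hlogn : 0 < Real.log n := Real.log_pos (by exact_mod_cast hn)
  have hKR : (1 : ℝ) ≤ K := by exact_mod_cast hK1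
  have hmn : (n : ℝ) ≤ m := by exact_mod_cast hnm
  have hm0 : (0 : ℝ) ≤ m := by positivity
  by_cases hcase : n ≤ 6 ^ (4 * K)
  · -- trivial code suffices
    refine ⟨n, fun x => x, trivialCode' r N, ?_⟩
    have hlog6 : Real.log 6 ≤ 2 := by
      rw [Real.log_le_iff_le_exp (by norm_num)]
      have h1 : (2.7182818283 : ℝ) < Real.exp 1 := Real.exp_one_gt_d9
      have h2 : Real.exp 2 = Real.exp 1 * Real.exp 1 := by
        rw [← Real.exp_add]; norm_num
      nlinarith [Real.exp_pos 1]
    have hlogn8K : Real.log n ≤ 8 * K := by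
      have hc : (n : ℝ) ≤ (6 : ℝ) ^ (4 * K) := by
        have : ((6 ^ (4 * K) : ℕ) : ℝ) = (6 : ℝ) ^ (4 * K) := by push_cast; ring
        rw [← this]; exact_mod_cast hcase
      calc Real.log n ≤ Real.log ((6 : ℝ) ^ (4 * K)) := Real.log_le_log hn0 hc
        _ = (4 * K : ℕ) * Real.log 6 := Real.log_pow _ _
        _ ≤ (4 * K : ℕ) * 2 := by
            apply mul_le_mul_of_nonneg_left hlog6 (by positivity)
        _ = 8 * K := by push_cast; ring
    have hkey : (n : ℝ) * Real.log n ≤ (m : ℝ) * (8 * K) :=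
      mul_le_mul hmn hlogn8K hlogn.le hm0
    have hrw : 8 * ((m : ℝ) / Real.log n) * K = (m : ℝ) * (8 * K) / Real.log n := by
      ring
    rw [hrw, le_div_iff₀ hlogn]
    exact hkey
  · -- the clique-cover code
    push_neg at hcase
    have hseq : ∀ l : List (Fin m), ExpList r N l → l.length ≤ K :=
      fun l hl => length_le_mes r N l hl
    obtain ⟨𝒞, hclq, hcov', hbnd⟩ := greedy r N K hseq m Finset.univ (by simp)
    have hcov : ∀ j : Fin m, ∃ C ∈ 𝒞, j ∈ C := fun j => hcov' j (Finset.mem_univ j)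
    obtain ⟨E, hE⟩ := code_of_cover r N 𝒞 hclq hcov
    refine ⟨𝒞.card, E, hE, ?_⟩
    have hcardu : (Finset.univ : Finset (Fin m)).card = m := by simp
    rw [hcardu] at hbnd
    set t := Nat.log 2 (Nat.sqrt n) with ht
    have hphi := phi_le K t m
    have hsqn0 : (0 : ℝ) < Real.sqrt n := Real.sqrt_pos.mpr hn0
    have hsq4 : (0 : ℝ) < Real.sqrt (Real.sqrt n) := Real.sqrt_pos.mpr hsqn0
    -- 6^K ≤ n^(1/4)
    have h6K : (6 : ℝ) ^ K ≤ Real.sqrt (Real.sqrt n) := by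
      have e1 : ((6 : ℝ) ^ K) ^ 4 = (6 : ℝ) ^ (4 * K) := by
        rw [← pow_mul, Nat.mul_comm]
      have e2 : (Real.sqrt (Real.sqrt n)) ^ 4 = n := by
        rw [show (4 : ℕ) = 2 * 2 from rfl, pow_mul, Real.sq_sqrt (Real.sqrt_nonneg _),
          Real.sq_sqrt hn0.le]
      have h4 : ((6 : ℝ) ^ K) ^ 4 ≤ (Real.sqrt (Real.sqrt n)) ^ 4 := by
        rw [e1, e2]
        have : ((6 ^ (4 * K) : ℕ) : ℝ) ≤ (n : ℝ) := by exact_mod_cast hcase.le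
        push_cast at this
        linarith
      exact (pow_le_pow_iff_left₀ (by positivity) (Real.sqrt_nonneg _) (by norm_num)).mp h4
    -- 2^t ≤ √n
    have h2t : (2 : ℝ) ^ t ≤ Real.sqrt n := by
      have hsn0 : Nat.sqrt n ≠ 0 := by
        have : 0 < Nat.sqrt n := Nat.sqrt_pos.mpr (by omega)
        omega
      have h1 : 2 ^ t ≤ Nat.sqrt n := Nat.pow_log_le_self 2 hsn0
      calc (2 : ℝ) ^ t = ((2 ^ t : ℕ) : ℝ) := by push_cast; ring
        _ ≤ ((Nat.sqrt n : ℕ) : ℝ) := by exact_mod_cast h1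
        _ ≤ Real.sqrt n := Real.nat_sqrt_le_real_sqrt
    -- log n ≤ 4 n^(1/4)
    have hlog4 : Real.log n ≤ 4 * Real.sqrt (Real.sqrt n) := by
      have e : Real.log (Real.sqrt (Real.sqrt n)) = Real.log n / 4 := by
        rw [Real.log_sqrt (Real.sqrt_nonneg _), Real.log_sqrt hn0.le]; ring
      have h := Real.log_le_sub_one_of_pos hsq4
      rw [e] at h
      linarith
    have hkey : Real.sqrt (Real.sqrt n) * Real.sqrt n * Real.sqrt (Real.sqrt n) = n := by
      have h1 : Real.sqrt (Real.sqrt n) * Real.sqrt (Real.sqrt n) = Real.sqrt n :=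
        Real.mul_self_sqrt (Real.sqrt_nonneg _)
      have h2 : Real.sqrt n * Real.sqrt n = n := Real.mul_self_sqrt hn0.le
      calc Real.sqrt (Real.sqrt n) * Real.sqrt n * Real.sqrt (Real.sqrt n)
          = (Real.sqrt (Real.sqrt n) * Real.sqrt (Real.sqrt n)) * Real.sqrt n := by ring
        _ = Real.sqrt n * Real.sqrt n := by rw [h1]
        _ = n := h2
    have hprod : (6 : ℝ) ^ K * (2 : ℝ) ^ t * Real.log n ≤ 4 * n := by
      have hA : (6 : ℝ) ^ K * (2 : ℝ) ^ t ≤ Real.sqrt (Real.sqrt n) * Real.sqrt n :=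
        mul_le_mul h6K h2t (by positivity) (Real.sqrt_nonneg _)
      calc (6 : ℝ) ^ K * (2 : ℝ) ^ t * Real.log n
          ≤ (Real.sqrt (Real.sqrt n) * Real.sqrt n) * Real.log n :=
            mul_le_mul_of_nonneg_right hA hlogn.le
        _ ≤ (Real.sqrt (Real.sqrt n) * Real.sqrt n) * (4 * Real.sqrt (Real.sqrt n)) :=
            mul_le_mul_of_nonneg_left hlog4 (by positivity)
        _ = 4 * (Real.sqrt (Real.sqrt n) * Real.sqrt n * Real.sqrt (Real.sqrt n)) := by ring
        _ = 4 * n := by rw [hkey]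
    -- part (a)
    have hpa : ((6 ^ K * 2 ^ t : ℕ) : ℝ) ≤ 4 * ((m : ℝ) / Real.log n) * K := by
      have hcast : ((6 ^ K * 2 ^ t : ℕ) : ℝ) = (6 : ℝ) ^ K * (2 : ℝ) ^ t := by
        push_cast; ring
      rw [hcast, show 4 * ((m : ℝ) / Real.log n) * K = (4 * m * K) / Real.log n by ring,
        le_div_iff₀ hlogn]
      calc (6 : ℝ) ^ K * 2 ^ t * Real.log n ≤ 4 * n := hprod
        _ ≤ 4 * m * K := by nlinarith
    -- part (b)
    have hpb : (m : ℝ) * (1 / ((t : ℝ) + 1)) ≤ 3 * ((m : ℝ) / Real.log n) * K := by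
      have h2t1 : Real.sqrt n ≤ (2 : ℝ) ^ (t + 1) := by
        have h1 : Nat.sqrt n < 2 ^ (t + 1) := Nat.lt_pow_succ_log_self (by norm_num) _
        have h2' : (n : ℝ) ≤ ((Nat.sqrt n : ℝ) + 1) ^ 2 := by
          have hnat : n ≤ (Nat.sqrt n + 1) ^ 2 := by
            rw [pow_two]; simpa using (Nat.lt_succ_sqrt n).le
          exact_mod_cast hnat
        have h3 : Real.sqrt n ≤ (Nat.sqrt n : ℝ) + 1 := by
          have := Real.sqrt_le_sqrt h2'
          rwa [Real.sqrt_sq (by positivity)] at this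
        calc Real.sqrt n ≤ (Nat.sqrt n : ℝ) + 1 := h3
          _ ≤ ((2 ^ (t + 1) : ℕ) : ℝ) := by exact_mod_cast h1
          _ = (2 : ℝ) ^ (t + 1) := by push_cast; ring
      have hlog2 : Real.log 2 ≤ 1 := by
        have := Real.log_le_sub_one_of_pos (by norm_num : (0 : ℝ) < 2); linarith
      have hlogle : Real.log n ≤ 2 * ((t : ℝ) + 1) := by
        have h4 : Real.log (Real.sqrt n) ≤ Real.log ((2 : ℝ) ^ (t + 1)) :=
          Real.log_le_log hsqn0 h2t1
        rw [Real.log_sqrt hn0.le, Real.log_pow] at h4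
        have h5 : ((t + 1 : ℕ) : ℝ) * Real.log 2 ≤ ((t + 1 : ℕ) : ℝ) * 1 :=
          mul_le_mul_of_nonneg_left hlog2 (by positivity)
        push_cast at h4 h5 ⊢
        linarith
      have htpos : (0 : ℝ) < (t : ℝ) + 1 := by positivity
      rw [show 3 * ((m : ℝ) / Real.log n) * K = (3 * m * K) / Real.log n by ring,
        mul_one_div, div_le_div_iff₀ htpos hlogn]
      have step1 : (m : ℝ) * Real.log n ≤ (m : ℝ) * (2 * ((t : ℝ) + 1)) :=
        mul_le_mul_of_nonneg_left hlogle hm0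
      have key : (0 : ℝ) ≤ ((K : ℝ) - 1) * ((m : ℝ) * ((t : ℝ) + 1)) :=
        mul_nonneg (by linarith) (mul_nonneg hm0 htpos.le)
      nlinarith
    have hfin : (𝒞.card : ℝ) ≤ 7 * ((m : ℝ) / Real.log n) * K := by
      have := add_le_add hpa hpb
      calc (𝒞.card : ℝ) ≤ ∑ u ∈ Finset.Ioc 0 m, (1 : ℝ) / (QQ K u) := hbnd
        _ ≤ ((6 ^ K * 2 ^ t : ℕ) : ℝ) + (m : ℝ) * (1 / ((t : ℝ) + 1)) := hphi
        _ ≤ 4 * ((m : ℝ) / Real.log n) * K + 3 * ((m : ℝ) / Real.log n) * K := this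
        _ = 7 * ((m : ℝ) / Real.log n) * K := by ring
    have hnn : (0 : ℝ) ≤ ((m : ℝ) / Real.log n) * K := by positivity
    calc (𝒞.card : ℝ) ≤ 7 * ((m : ℝ) / Real.log n) * K := hfin
      _ ≤ 8 * ((m : ℝ) / Real.log n) * K := by linarith
end
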